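/- Suppose {|f_i⟩}_{i=1}^{d²} are unit vectors in ℂ^d forming a tight frame on ℂ^d, and {|f_i⟩⊗|f_i⟩}_{i=1}^{d²} forms a tight frame on the symmetric subspace of ℂ^d⊗ℂ^d. Then {|f_i⟩} is a SIC, i.e. |⟨f_i|f_j⟩|² = 1/(d+1) for all i ≠ j. -/

import Mathlib

open Matrix Complex BigOperators

noncomputable def ww (d : ℕ) : ℂ := Complex.exp (2 * Real.pi * Complex.I / d)

noncomputable def tt (d : ℕ) : ℂ := Complex.exp (2 * Real.pi * Complex.I * (d + 1) / (2 * d))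

/-- Displacement operator `T_a = τ^{a₁a₂} S^{a₁} C^{a₂}` as a concrete matrix. -/
noncomputable def T (d : ℕ) (a : ℤ × ℤ) : Matrix (ZMod d) (ZMod d) ℂ :=
  Matrix.of fun i j => tt d ^ (a.1 * a.2) *
    (if i = j + (a.1 : ZMod d) then ww d ^ (a.2 * (j.val : ℤ)) else 0)

def fz {d : ℕ} (a : Fin d × Fin d) : ℤ × ℤ := (((a.1 : ℕ) : ℤ), ((a.2 : ℕ) : ℤ))

noncomputable def dotc {α : Type*} [Fintype α] (v w : α → ℂ) : ℂ := ∑ p, star (v p) * w p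

/-- Orthogonal projection onto the symmetric subspace of `ℂ^d ⊗ ℂ^d`. -/
noncomputable def Psym (d : ℕ) : Matrix (ZMod d × ZMod d) (ZMod d × ZMod d) ℂ :=
  Matrix.of fun p q => (1 / 2 : ℂ) * ((if p = q then 1 else 0) + (if p = (q.2, q.1) then 1 else 0))

/-- `T_a ⊗ T_a` -/
noncomputable def TT (d : ℕ) (a : ℤ × ℤ) : Matrix (ZMod d × ZMod d) (ZMod d × ZMod d) ℂ :=
  Matrix.kroneckerMap (· * ·) (T d a) (T d a)

/-- Discrete Fourier transform matrix. -/
noncomputable def Fdft (d : ℕ) : Matrix (ZMod d) (ZMod d) ℂ :=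
  Matrix.of fun i j => ((1 / Real.sqrt d : ℝ) : ℂ) * ww d ^ (i.val * j.val)

/-- The vector `|0⟩ ⊗ F|0⟩`. -/
noncomputable def b0 (d : ℕ) : ZMod d × ZMod d → ℂ :=
  fun p => (if p.1 = 0 then 1 else 0) * Fdft d p.2 0

/-- Partial trace over the first factor of `|v⟩⟨v|`. -/
noncomputable def ptrace1 (d : ℕ) [NeZero d] (v : ZMod d × ZMod d → ℂ) :
    Matrix (ZMod d) (ZMod d) ℂ :=
  Matrix.of fun j l => ∑ i, v (i, j) * star (v (i, l))

/-- tensor square of a vector -/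
noncomputable def tp {d : ℕ} (f : ZMod d → ℂ) : ZMod d × ZMod d → ℂ :=
  fun p => f p.1 * f p.2

/-- `b` is a fiducial vector of a WH-type basis. -/
def IsWHFiducial (d : ℕ) [NeZero d] (b : ZMod d × ZMod d → ℂ) : Prop :=
  dotc b b = 1 ∧ ∀ a : Fin d × Fin d, ((a.1 : ℕ), (a.2 : ℕ)) ≠ (0, 0) →
    dotc b ((TT d (fz a)).mulVec b) = 0

noncomputable def Cm (d : ℕ) : Matrix (ZMod d) (ZMod d) ℂ :=
  Matrix.of fun i j => if i = j then ww d ^ (i.val) else 0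

noncomputable def Sm (d : ℕ) : Matrix (ZMod d) (ZMod d) ℂ :=
  Matrix.of fun i j => if i = j + 1 then 1 else 0

/-- `(1/√2)(|j⟩|j+i⟩ ± |j+i⟩|j⟩)` (up to normalization), sign `s`. -/
noncomputable def symVec (d : ℕ) (i s : ℤ) (j : ZMod d) : ZMod d × ZMod d → ℂ :=
  fun p => (if p = (j, j + (i : ZMod d)) then 1 else 0) +
    (s : ℂ) * (if p = (j + (i : ZMod d), j) then 1 else 0)

/-- The invariant subspace `H_{±i}`. -/
noncomputable def Hsub (d : ℕ) (i s : ℤ) : Submodule ℂ (ZMod d × ZMod d → ℂ) :=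
  Submodule.span ℂ (Set.range (symVec d i s))

/-- The swap operator on `ℂ^d ⊗ ℂ^d`. -/
def swapL (d : ℕ) : (ZMod d × ZMod d → ℂ) →ₗ[ℂ] (ZMod d × ZMod d → ℂ) where
  toFun v := fun p => v (p.2, p.1)
  map_add' _ _ := rfl
  map_smul' _ _ := rfl

/-- `H_t` for `t ∈ [-(d-1)/2 .. (d-1)/2]` (d odd). -/
noncomputable def Hodd (d : ℕ) (t : ℤ) : Submodule ℂ (ZMod d × ZMod d → ℂ) :=
  if 0 ≤ t then Hsub d t 1 else Hsub d (-t) (-1)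


/-! Testing the two frame identities against `f i` and `f i ⊗ f i` gives
`∑ l, |⟨f i, f l⟩|² = B` and `∑ l, |⟨f i, f l⟩|⁴ = B₂`, and taking traces forces `B = d` and
`B₂ = 2d/(d+1)`. The `d² - 1` overlaps `|⟨f i, f l⟩|²` with `l ≠ i` then have mean `1/(d+1)` and
mean square `1/(d+1)²`, so their variance vanishes and each of them equals `1/(d+1)`. -/

section dotc

variable {α : Type*} [Fintype α]

lemma dotc_eq_star_dotProduct (v w : α → ℂ) : dotc v w = star v ⬝ᵥ w := rfl

lemma star_dotc (v w : α → ℂ) : star (dotc v w) = dotc w v := by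
  simp [dotc, mul_comm]

lemma normSq_dotc (v w : α → ℂ) : (normSq (dotc v w) : ℂ) = dotc v w * dotc w v := by
  rw [normSq_eq_conj_mul_self, ← star_def, star_dotc, mul_comm]

lemma dotc_smul (v w : α → ℂ) (c : ℂ) : dotc v (c • w) = c * dotc v w := by
  simp [dotc_eq_star_dotProduct, dotProduct_smul]

lemma trace_vecMulVec_star (v : α → ℂ) : (vecMulVec v (star v)).trace = dotc v v := by
  rw [trace_vecMulVec, dotc_eq_star_dotProduct, dotProduct_comm]

lemma sum_normSq_dotc_eq_dotc_frameOperator_mulVec {ι : Type*} [Fintype ι] (g : ι → α → ℂ)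
    (v : α → ℂ) :
    ∑ i, (normSq (dotc v (g i)) : ℂ) = dotc v ((∑ i, vecMulVec (g i) (star (g i))) *ᵥ v) := by
  rw [sum_mulVec, dotc_eq_star_dotProduct, dotProduct_sum]
  refine Finset.sum_congr rfl fun i _ => ?_
  rw [vecMulVec_mulVec, normSq_dotc]
  simp [dotc_eq_star_dotProduct, dotProduct_comm (star v), mul_comm]

lemma card_eq_mul_trace_of_sum_vecMulVec {ι : Type*} [Fintype ι] (g : ι → α → ℂ)
    (hnorm : ∀ i, dotc (g i) (g i) = 1) (c : ℂ) (M : Matrix α α ℂ)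
    (h : ∑ i, vecMulVec (g i) (star (g i)) = c • M) :
    (Fintype.card ι : ℂ) = c * M.trace := by
  have := congrArg trace h
  rw [trace_sum, trace_smul] at this
  simp only [trace_vecMulVec_star, hnorm] at this
  simpa using this

end dotc

lemma dotc_tp {d : ℕ} [NeZero d] (v w : ZMod d → ℂ) : dotc (tp v) (tp w) = dotc v w ^ 2 := by
  simp only [dotc, sq, Finset.sum_mul_sum, Fintype.sum_prod_type, tp, star_mul]
  refine Finset.sum_congr rfl fun a _ => Finset.sum_congr rfl fun b _ => by ring

lemma Psym_mulVec_tp {d : ℕ} [NeZero d] (v : ZMod d → ℂ) : Psym d *ᵥ tp v = tp v := by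
  ext p
  have hswap : ∀ q : ZMod d × ZMod d, p = (q.2, q.1) ↔ q = (p.2, p.1) := by
    rintro ⟨a, b⟩; obtain ⟨c, e⟩ := p; simp [and_comm, eq_comm]
  simp only [Psym, mulVec, dotProduct, of_apply, hswap, mul_add, add_mul, Finset.sum_add_distrib,
    mul_ite, ite_mul, mul_one, mul_zero, zero_mul, Finset.sum_ite_eq, Finset.sum_ite_eq',
    Finset.mem_univ, if_true, tp]
  ring

lemma trace_Psym (d : ℕ) [NeZero d] : (Psym d).trace = ((d : ℂ) * d + d) / 2 := by
  have hdiag : ∀ a b : ZMod d, (a, b) = (b, a) ↔ b = a := by simp [eq_comm]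
  simp only [trace, diag, Psym, of_apply, Fintype.sum_prod_type, hdiag]
  simp [mul_add, Finset.sum_add_distrib, ZMod.card]
  ring

lemma Finset.eq_of_sum_eq_of_sum_sq_eq {ι : Type*} (s : Finset ι) (x : ι → ℝ) (c : ℝ)
    (h1 : ∑ l ∈ s, x l = s.card * c) (h2 : ∑ l ∈ s, x l ^ 2 = s.card * c ^ 2) :
    ∀ l ∈ s, x l = c := by
  have hvar : ∑ l ∈ s, (x l - c) ^ 2 = 0 := by
    calc ∑ l ∈ s, (x l - c) ^ 2 = ∑ l ∈ s, x l ^ 2 - 2 * c * ∑ l ∈ s, x l + s.card * c ^ 2 := by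
          simp only [sub_sq, Finset.sum_add_distrib, Finset.sum_sub_distrib, ← Finset.sum_mul,
            ← Finset.mul_sum, Finset.sum_const, nsmul_eq_mul]
          ring
      _ = 0 := by rw [h1, h2]; ring
  intro l hl
  have := (Finset.sum_eq_zero_iff_of_nonneg fun l _ => sq_nonneg (x l - c)).1 hvar l hl
  linarith [pow_eq_zero_iff (n := 2) (by norm_num) |>.1 this]

lemma eq_inv_succ_of_sum_eq_of_sum_sq_eq {ι : Type*} [Fintype ι] [DecidableEq ι] (d : ℕ)
    (hcard : Fintype.card ι = d * d) (x : ι → ℝ) (i : ι) (hxi : x i = 1)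
    (h1 : ∑ l, x l = d) (h2 : ∑ l, x l ^ 2 = 2 * d / (d + 1)) :
    ∀ j ≠ i, x j = 1 / (d + 1) := by
  have hcard' : ((Finset.univ.erase i).card : ℝ) = d * d - 1 := by
    rw [Finset.cast_card_erase_of_mem (Finset.mem_univ i), Finset.card_univ, hcard]
    push_cast; ring
  have hd : (d : ℝ) + 1 ≠ 0 := by positivity
  refine fun j hji => Finset.eq_of_sum_eq_of_sum_sq_eq _ x _ ?_ ?_ j
    (Finset.mem_erase.2 ⟨hji, Finset.mem_univ j⟩)
  · rw [Finset.sum_erase_eq_sub (Finset.mem_univ i), h1, hxi, hcard']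
    field_simp; ring
  · rw [Finset.sum_erase_eq_sub (Finset.mem_univ i), h2, hxi, hcard']
    field_simp; ring

lemma tight_frame_bound_eq {ι : Type*} [Fintype ι] (d : ℕ) [NeZero d]
    (hcard : Fintype.card ι = d * d) (g : ι → ZMod d → ℂ) (hnorm : ∀ i, dotc (g i) (g i) = 1)
    (B : ℝ) (hB : ∑ i, vecMulVec (g i) (star (g i)) = (B : ℂ) • 1) :
    B = d := by
  have := card_eq_mul_trace_of_sum_vecMulVec g hnorm _ _ hB
  rw [hcard, trace_one, ZMod.card, Nat.cast_mul] at this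
  exact_mod_cast (mul_right_cancel₀ (NeZero.ne (d : ℂ)) this).symm

lemma sym_tight_frame_bound_eq {ι : Type*} [Fintype ι] (d : ℕ) [NeZero d]
    (hcard : Fintype.card ι = d * d) (g : ι → ZMod d → ℂ) (hnorm : ∀ i, dotc (g i) (g i) = 1)
    (B₂ : ℝ) (hB₂ : ∑ i, vecMulVec (tp (g i)) (star (tp (g i))) = (B₂ : ℂ) • Psym d) :
    B₂ = 2 * d / (d + 1) := by
  have := card_eq_mul_trace_of_sum_vecMulVec _ (fun i => by rw [dotc_tp, hnorm, one_pow]) _ _ hB₂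
  rw [trace_Psym, hcard] at this
  have h : (B₂ : ℂ) = ((2 * d / (d + 1) : ℝ) : ℂ) := by
    push_cast at this ⊢
    field_simp
    apply mul_left_cancel₀ (NeZero.ne (d : ℂ))
    linear_combination (-2) * this
  exact_mod_cast h

theorem stmt6 (d : ℕ) [NeZero d] (f : Fin (d * d) → ZMod d → ℂ)
    (hnorm : ∀ i, dotc (f i) (f i) = 1)
    (B : ℝ) (hB : ∑ i, Matrix.vecMulVec (f i) (star (f i)) = (B : ℂ) • 1)
    (B₂ : ℝ)
    (hB₂ : ∑ i, Matrix.vecMulVec (tp (f i)) (star (tp (f i))) = (B₂ : ℂ) • Psym d) :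
    ∀ i j, i ≠ j → ‖dotc (f i) (f j)‖ ^ 2 = 1 / ((d : ℝ) + 1) := by
  intro i j hij
  have hcard : Fintype.card (Fin (d * d)) = d * d := Fintype.card_fin _
  have h1 : ∑ l, normSq (dotc (f i) (f l)) = d := by
    have := sum_normSq_dotc_eq_dotc_frameOperator_mulVec f (f i)
    rw [hB, smul_mulVec, one_mulVec, dotc_smul, hnorm, mul_one,
      tight_frame_bound_eq d hcard f hnorm B hB] at this
    exact_mod_cast this
  have h2 : ∑ l, normSq (dotc (f i) (f l)) ^ 2 = 2 * d / (d + 1) := by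
    have := sum_normSq_dotc_eq_dotc_frameOperator_mulVec (fun l => tp (f l)) (tp (f i))
    simp only [hB₂, smul_mulVec, Psym_mulVec_tp, dotc_smul, dotc_tp, hnorm, one_pow, mul_one,
      sym_tight_frame_bound_eq d hcard f hnorm B₂ hB₂, map_pow] at this
    exact_mod_cast this
  rw [Complex.sq_norm]
  exact eq_inv_succ_of_sum_eq_of_sum_sq_eq d hcard _ i (by simp [hnorm]) h1 h2 j hij.symm
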